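/- For the λ-biased random walk on the complete k-ary tree of height n with 0 < λ < k, the even-time stationary probability p(n) at the root satisfies ((k−λ)/k)·(λ/k)^{n+1} ≤ p(n) ≤ (λ/k)^{n−1}. -/

import Mathlib

open Finset

lemma geom_aux5 (x : ℝ) (hx : 1 < x) (m : ℕ) :
    (x - 1) * ∑ i ∈ Finset.Icc 1 m, x ^ i ≤ x ^ (m + 1) := by
  have hx0 : 0 < x := lt_trans one_pos hx
  induction m with
  | zero => simp; nlinarith
  | succ m ih =>
    rw [Finset.sum_Icc_succ_top (by omega : 1 ≤ m + 1)]
    have h1 : x ^ (m + 1 + 1) = x ^ (m + 1) * x := pow_succ x (m + 1)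
    nlinarith [pow_pos hx0 (m + 1)]



/-- Even-time stationary probability at the root of the `λ`-biased walk on the
complete `k`-ary tree of height `n`. -/
noncomputable def ptree (k : ℕ) (lam : ℝ) (n : ℕ) : ℝ :=
  if Odd n then
    ((k : ℝ) / (lam + k)) /
      ((k : ℝ) / (lam + k) + ∑ i ∈ Finset.Icc 1 (n / 2), ((k : ℝ) / lam) ^ (2 * i))
  else
    ((k : ℝ) / (lam + k)) /
      ((k : ℝ) / (lam + k) + ∑ i ∈ Finset.Icc 1 (n / 2 - 1), ((k : ℝ) / lam) ^ (2 * i)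
        + (lam / (lam + k)) * ((k : ℝ) / lam) ^ n)

theorem stmt5 (k : ℕ) (lam : ℝ) (hk : 2 ≤ k) (h0 : 0 < lam) (hlk : lam < k)
    (n : ℕ) (hn : 1 ≤ n) :
    ((k : ℝ) - lam) / k * (lam / k) ^ (n + 1) ≤ ptree k lam n ∧
      ptree k lam n ≤ (lam / k) ^ (n - 1) := by
  have hk0 : (0:ℝ) < k := lt_trans h0 hlk
  have hl0 : lam ≠ 0 := ne_of_gt h0
  have hlk0 : lam + (k:ℝ) ≠ 0 := by positivity
  obtain ⟨r, hrdef⟩ : ∃ r : ℝ, r = (k:ℝ) / lam := ⟨_, rfl⟩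
  have hr1 : 1 < r := by rw [hrdef]; exact (one_lt_div h0).mpr hlk
  have hr0 : 0 < r := lt_trans one_pos hr1
  have h1r : (0:ℝ) < 1 + r := by linarith
  have h1r' : (1:ℝ) + r ≠ 0 := ne_of_gt h1r
  have hA : (k:ℝ) / (lam + k) = r / (1 + r) := by
    rw [hrdef]; field_simp
  have hB : lam / (lam + (k:ℝ)) = 1 / (1 + r) := by
    rw [hrdef]; field_simp
  have hlam_k : lam / (k:ℝ) = r⁻¹ := by rw [hrdef, inv_div]
  have hfrac : ((k:ℝ) - lam) / k = (r - 1) / r := by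
    rw [hrdef]; field_simp
  have hApos : 0 < r / (1 + r) := div_pos hr0 h1r
  have hAle : r / (1 + r) ≤ 1 := by rw [div_le_one h1r]; linarith
  have hr2 : 1 < r ^ 2 := by nlinarith
  have hP : 1 ≤ r ^ (n + 1) := one_le_pow₀ hr1.le
  have hlhs : (r - 1) / r * (r⁻¹) ^ (n + 1) = (r - 1) / (r * r ^ (n + 1)) := by
    rw [inv_pow, ← one_div, div_mul_div_comm, mul_one]
  have hr10 : 0 ≤ r - 1 := by linarith
  have hc : r / (1 + r) * (1 + r) = r := div_mul_cancel₀ r h1r'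
  have hQ : r ^ 2 - 1 ≤ (r ^ 2 - 1) * r ^ (n + 1) :=
    le_mul_of_one_le_right (by linarith) hP
  rw [ptree, hfrac, hlam_k, hA, ← hrdef]
  split_ifs with hodd
  · -- odd case, n = 2m+1
    obtain ⟨m, hm⟩ := hodd
    have hm2 : n / 2 = m := by omega
    rw [hm2]
    obtain ⟨S, hSdef⟩ : ∃ S : ℝ, S = ∑ i ∈ Finset.Icc 1 m, r ^ (2 * i) := ⟨_, rfl⟩
    rw [← hSdef]
    have hS0 : 0 ≤ S := by
      rw [hSdef]; exact Finset.sum_nonneg fun i _ => pow_nonneg hr0.le _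
    have hD : 0 < r / (1 + r) + S := by linarith
    have hgeom : (r ^ 2 - 1) * S ≤ r ^ (n + 1) := by
      have h1 : S = ∑ i ∈ Finset.Icc 1 m, (r ^ 2) ^ i := by
        rw [hSdef]; refine Finset.sum_congr rfl fun i _ => ?_; rw [← pow_mul]
      have h2 : (r ^ 2) ^ (m + 1) = r ^ (n + 1) := by
        rw [← pow_mul]; congr 1; omega
      rw [h1, ← h2]; exact geom_aux5 _ hr2 m
    constructor
    · -- lower bound
      rw [hlhs, div_le_div_iff₀ (by positivity) hD]
      have key : (r - 1) * (r + (1 + r) * S) ≤ r ^ 2 * r ^ (n + 1) := by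
        linarith [hgeom, hQ, hr1]
      rw [← mul_le_mul_iff_left₀ h1r]
      calc (r - 1) * (r / (1 + r) + S) * (1 + r)
          = (r - 1) * (r + (1 + r) * S) := by linear_combination (r - 1) * hc
        _ ≤ r ^ 2 * r ^ (n + 1) := key
        _ = r / (1 + r) * (r * r ^ (n + 1)) * (1 + r) := by
            linear_combination (-(r * r ^ (n + 1))) * hc
    · -- upper bound
      rw [inv_pow, ← one_div, div_le_div_iff₀ hD (by positivity)]
      rcases Nat.eq_zero_or_pos m with hm0 | hm1
      · subst hm0
        have : n - 1 = 0 := by omega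
        rw [this, pow_zero]
        linarith
      · have hterm : r ^ (2 * m) ≤ S := by
          rw [hSdef]
          exact Finset.single_le_sum (f := fun i => r ^ (2 * i))
            (fun i _ => pow_nonneg hr0.le _) (Finset.mem_Icc.mpr ⟨hm1, le_refl m⟩)
        have h2m : n - 1 = 2 * m := by omega
        rw [h2m]
        nlinarith [hterm, hAle, pow_pos hr0 (2 * m), hApos]
  · -- even case
    have heven : ∃ m, n = 2 * m ∧ 1 ≤ m := by
      rcases Nat.even_or_odd n with ⟨m, hm⟩ | ho
      · exact ⟨m, by omega, by omega⟩
      · exact absurd ho hodd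
    obtain ⟨m, hm, hm1⟩ := heven
    have hm2 : n / 2 - 1 = m - 1 := by omega
    rw [hm2, hB]
    obtain ⟨S, hSdef⟩ : ∃ S : ℝ, S = ∑ i ∈ Finset.Icc 1 (m - 1), r ^ (2 * i) := ⟨_, rfl⟩
    rw [← hSdef]
    have hS0 : 0 ≤ S := by
      rw [hSdef]; exact Finset.sum_nonneg fun i _ => pow_nonneg hr0.le _
    have hT0 : 0 ≤ 1 / (1 + r) * r ^ n :=
      mul_nonneg (div_nonneg zero_le_one h1r.le) (pow_nonneg hr0.le n)
    have hD : 0 < r / (1 + r) + S + 1 / (1 + r) * r ^ n := by linarith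
    have hgeom : (r ^ 2 - 1) * S ≤ r ^ n := by
      have h1 : S = ∑ i ∈ Finset.Icc 1 (m - 1), (r ^ 2) ^ i := by
        rw [hSdef]; refine Finset.sum_congr rfl fun i _ => ?_; rw [← pow_mul]
      have h2 : (r ^ 2) ^ (m - 1 + 1) = r ^ n := by
        rw [← pow_mul]; congr 1; omega
      rw [h1, ← h2]; exact geom_aux5 _ hr2 (m - 1)
    have hpowsucc : r ^ (n + 1) = r ^ n * r := pow_succ r n
    have hPn : 1 ≤ r ^ n := one_le_pow₀ hr1.le
    constructor
    · rw [hlhs, div_le_div_iff₀ (by positivity) hD]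
      have hc2 : 1 / (1 + r) * r ^ n * (1 + r) = r ^ n := by
        field_simp
      have key : (r - 1) * (r + (1 + r) * S + r ^ n) ≤ r ^ 2 * r ^ (n + 1) := by
        linarith [hgeom, hQ, hr1, hpowsucc, hS0]
      rw [← mul_le_mul_iff_left₀ h1r]
      calc (r - 1) * (r / (1 + r) + S + 1 / (1 + r) * r ^ n) * (1 + r)
          = (r - 1) * (r + (1 + r) * S + r ^ n) := by
            linear_combination (r - 1) * hc + (r - 1) * hc2
        _ ≤ r ^ 2 * r ^ (n + 1) := key
        _ = r / (1 + r) * (r * r ^ (n + 1)) * (1 + r) := by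
            linear_combination (-(r * r ^ (n + 1))) * hc
    · rw [inv_pow, ← one_div, div_le_div_iff₀ hD (by positivity)]
      have hT : 1 / (1 + r) * r ^ n = r / (1 + r) * r ^ (n - 1) := by
        have hrn : r ^ n = r ^ (n - 1) * r := by
          rw [← pow_succ]; congr 1; omega
        rw [hrn]; ring
      rw [hT]
      linarith
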